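/- arXiv:0901.3706 — 7 statements merged into one kernel-verified Lean document; each statement's English description precedes it below -/
import Mathlib

section
/- For a binary form p(x1,x2) = Σ_{i=0}^d C(d,i) c_i x1^i x2^{d-i} over ℂ, p can be written as a sum p = Σ_{j=1}^r λ_j (α_j x1 + β_j x2)^d with r distinct linear forms if and only if (i) there exists a nonzero vector q = (q_0,...,q_r) in the kernel of the (d-r+1)×(r+1) Hankel matrix H with entries H_{ij} = c_{i+j-2}, and (ii) the polynomial q(x1,x2) = Σ_{ℓ=0}^r q_ℓ x1^ℓ x2^{r-ℓ} has r distinct roots in ℙ^1. -/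
open MvPolynomial

/-!
Comparing coefficients, `p = ∑ λ_j (α_j x₁ + β_j x₂)^d` says `c_k = ∑ λ_j α_j^k β_j^(d-k)` for
`k ≤ d`. Let polynomials act on sequences through the shift `c ↦ (k ↦ c (k + 1))`; the Hankel
condition says that `q`, dehomogenized, kills `c` at the positions `0, …, d - r`. A power sequence
`k ↦ a^k b^(d-k)` is killed by every `q` whose form vanishes at `[a : b]`, which gives one
direction. Conversely, splitting off a factor `b₀ X - a₀` of `q` turns the Hankel condition for
`c` into the one for `k ↦ b₀ c (k + 1) - a₀ c k` and the remaining `r - 1` points; since the points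
are distinct, `b₀ a_j - a₀ b_j ≠ 0`, so that representation lifts back to `c` up to a solution of
`b₀ s (k + 1) = a₀ s k`, which is a multiple of the power sequence of `[a₀ : b₀]`.
-/

section BinaryForm

variable {R : Type*} [CommSemiring R]

noncomputable def binaryForm (n : ℕ) : (Fin (n + 1) → R) →ₗ[R] MvPolynomial (Fin 2) R where
  toFun w := ∑ i, C (w i) * X 0 ^ (i : ℕ) * X 1 ^ (n - i)
  map_add' v w := by simp only [Pi.add_apply, map_add, add_mul, Finset.sum_add_distrib]
  map_smul' s w := by
    simp only [Pi.smul_apply, smul_eq_mul, map_mul, Finset.smul_sum, smul_eq_C_mul, mul_assoc,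
      RingHom.id_apply]

lemma binaryForm_apply (n : ℕ) (w : Fin (n + 1) → R) :
    binaryForm n w = ∑ i, C (w i) * X 0 ^ (i : ℕ) * X 1 ^ (n - i) := rfl

lemma isHomogeneous_binaryForm (n : ℕ) (w : Fin (n + 1) → R) :
    (binaryForm n w).IsHomogeneous n := by
  refine IsHomogeneous.sum _ _ _ fun i _ => ?_
  rw [mul_assoc]
  have := ((isHomogeneous_X_pow (R := R) (0 : Fin 2) i).mul
    (isHomogeneous_X_pow (1 : Fin 2) (n - i))).C_mul (w i)
  rwa [Nat.add_sub_cancel' (Nat.lt_succ_iff.mp i.isLt)] at this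

lemma aeval_binaryForm [DecidableEq R] (n : ℕ) (w : Fin (n + 1) → R) :
    aeval ![Polynomial.X, 1] (binaryForm n w) = Polynomial.ofFn (n + 1) w := by
  simp [binaryForm_apply, Polynomial.ofFn_eq_sum_monomial, Polynomial.C_mul_X_pow_eq_monomial]

lemma eval_binaryForm (n : ℕ) (w : Fin (n + 1) → R) (x : Fin 2 → R) :
    eval x (binaryForm n w) = ∑ i, w i * x 0 ^ (i : ℕ) * x 1 ^ (n - i) := by
  simp [binaryForm_apply]

lemma binaryForm_injective (n : ℕ) : Function.Injective (binaryForm (R := R) n) := by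
  classical
  intro v w h
  apply Polynomial.injective_ofFn (n + 1)
  rw [← aeval_binaryForm, ← aeval_binaryForm, h]

lemma homogenize_eq_binaryForm {F : Polynomial R} {n : ℕ} (hF : F.natDegree ≤ n) :
    F.homogenize n = binaryForm n (fun i => F.coeff i) := by
  classical
  refine Polynomial.homogenize_eq_of_isHomogeneous (isHomogeneous_binaryForm n _) ?_
  rw [aeval_binaryForm]
  exact Polynomial.ofFn_comp_toFn_eq_id_of_natDegree_lt (Nat.lt_succ_of_le hF)

lemma fin_coeff_eq_zero_iff {F : Polynomial R} {n : ℕ} (hF : F.natDegree ≤ n) :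
    (fun i : Fin (n + 1) => F.coeff i) = 0 ↔ F = 0 := by
  classical
  refine ⟨fun h => ?_, fun h => by simp only [h, Polynomial.coeff_zero]; rfl⟩
  rw [← Polynomial.ofFn_comp_toFn_eq_id_of_natDegree_lt (Nat.lt_succ_of_le hF)]
  exact (congrArg (Polynomial.ofFn (n + 1)) h).trans (map_zero _)

lemma linear_pow_eq_binaryForm (α β : R) (n : ℕ) :
    (C α * X 0 + C β * X 1) ^ n
      = binaryForm n (fun i => n.choose i * α ^ (i : ℕ) * β ^ (n - i)) := by
  rw [add_pow, binaryForm_apply, ← Fin.sum_univ_eq_sum_range]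
  refine Finset.sum_congr rfl fun i _ => ?_
  simp only [mul_pow, map_mul, map_pow, map_natCast]
  ring

end BinaryForm

lemma binaryForm_choose_mul_eq_sum_linear_pow_iff {K : Type*} [Field K] [CharZero K]
    {ι : Type*} [Fintype ι] {d : ℕ} (c : Fin (d + 1) → K) (α β lam : ι → K) :
    binaryForm d (fun i => d.choose i * c i)
        = ∑ j, C (lam j) * (C (α j) * X 0 + C (β j) * X 1) ^ d
      ↔ ∀ i : Fin (d + 1), c i = ∑ j, lam j * α j ^ (i : ℕ) * β j ^ (d - i) := by
  have hsum : ∑ j, C (lam j) * (C (α j) * X 0 + C (β j) * X 1) ^ d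
      = binaryForm d (fun i => d.choose i * ∑ j, lam j * α j ^ (i : ℕ) * β j ^ (d - i)) := by
    simp only [linear_pow_eq_binaryForm]
    simp only [← smul_eq_C_mul, ← map_smul, ← map_sum]
    congr 1
    ext i
    simp only [Finset.sum_apply, Pi.smul_apply, smul_eq_mul, Finset.mul_sum]
    exact Finset.sum_congr rfl fun j _ => by ring
  rw [hsum, (binaryForm_injective d).eq_iff, _root_.funext_iff]
  refine forall_congr' fun i => mul_right_inj' ?_
  exact Nat.cast_ne_zero.mpr (Nat.choose_pos (Nat.lt_succ_iff.mp i.isLt)).ne'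

section ProjNodal

variable {K : Type*} [Field K] {ι : Type*} [Fintype ι]

lemma natDegree_C_mul_X_sub_C_le (a b : K) :
    (Polynomial.C b * Polynomial.X - Polynomial.C a).natDegree ≤ 1 := by
  rw [sub_eq_add_neg, ← Polynomial.C_neg]
  exact Polynomial.natDegree_linear_le

lemma C_mul_X_sub_C_eq_zero_iff (a b : K) :
    Polynomial.C b * Polynomial.X - Polynomial.C a = 0 ↔ (a, b) = 0 := by
  constructor
  · intro h
    have h0 := congrArg (Polynomial.coeff · 0) h
    have h1 := congrArg (Polynomial.coeff · 1) h
    simp at h0 h1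
    simp [h0, h1]
  · simp +contextual [Prod.ext_iff]

/-- The form `∏ j, (b j * x₁ - a j * x₂)`, vanishing at the points `[a j : b j]` of `ℙ¹`,
dehomogenized at `x₂ = 1`. -/
noncomputable def projNodal (a b : ι → K) : Polynomial K :=
  ∏ j, (Polynomial.C (b j) * Polynomial.X - Polynomial.C (a j))

lemma natDegree_projNodal_le (a b : ι → K) : (projNodal a b).natDegree ≤ Fintype.card ι := by
  refine (Polynomial.natDegree_prod_le _ _).trans ?_
  simpa using Finset.sum_le_sum fun j (_ : j ∈ Finset.univ) =>
    natDegree_C_mul_X_sub_C_le (a j) (b j)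

lemma homogenize_projNodal (a b : ι → K) :
    (projNodal a b).homogenize (Fintype.card ι) = ∏ j, (C (b j) * X 0 - C (a j) * X 1) := by
  have h := Polynomial.homogenize_finsetProd (s := Finset.univ) (n := fun _ => 1)
    fun j _ => natDegree_C_mul_X_sub_C_le (a j) (b j)
  simp only [Finset.sum_const, Finset.card_univ, smul_eq_mul, mul_one] at h
  rw [projNodal, h]
  simp [Polynomial.homogenize_sub]

lemma eval_homogenize_projNodal (a b : ι → K) (j : ι) :
    eval ![a j, b j] ((projNodal a b).homogenize (Fintype.card ι)) = 0 := by
  rw [homogenize_projNodal, map_prod]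
  exact Finset.prod_eq_zero (Finset.mem_univ j) (by simp [mul_comm])

lemma projNodal_ne_zero_iff (a b : ι → K) : projNodal a b ≠ 0 ↔ ∀ j, (a j, b j) ≠ 0 := by
  simp [projNodal, Finset.prod_ne_zero_iff, C_mul_X_sub_C_eq_zero_iff]

end ProjNodal

section Shift

variable {R : Type*} [CommSemiring R]

def shift : (ℕ → R) →ₗ[R] (ℕ → R) := LinearMap.funLeft R R Nat.succ

lemma shift_pow_apply (ℓ : ℕ) (c : ℕ → R) (k : ℕ) : (shift ^ ℓ) c k = c (k + ℓ) := by
  induction ℓ generalizing c with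
  | zero => rfl
  | succ ℓ ih => rw [pow_succ, Module.End.mul_apply, ih]; rfl

lemma aeval_shift_apply {F : Polynomial R} {n : ℕ} (hF : F.natDegree ≤ n) (c : ℕ → R) (k : ℕ) :
    Polynomial.aeval shift F c k = ∑ ℓ ∈ Finset.range (n + 1), F.coeff ℓ * c (k + ℓ) := by
  rw [Polynomial.aeval_eq_sum_range' (Nat.lt_succ_of_le hF)]
  simp [shift_pow_apply]

lemma aeval_shift_C_mul_X_sub_C_apply {R : Type*} [CommRing R] (a b : R) (c : ℕ → R) (k : ℕ) :
    Polynomial.aeval shift (Polynomial.C b * Polynomial.X - Polynomial.C a) c k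
      = b * c (k + 1) - a * c k := by
  simp [shift]

lemma hankel_iff_aeval_shift {d r : ℕ} (hr : r ≤ d) (c : Fin (d + 1) → R) {F : Polynomial R}
    (hF : F.natDegree ≤ r) :
    (∀ i : Fin (d - r + 1), ∑ j : Fin (r + 1), c ⟨i + j, by omega⟩ * F.coeff j = 0)
      ↔ ∀ i, i + r ≤ d →
        Polynomial.aeval shift F (fun k => if h : k < d + 1 then c ⟨k, h⟩ else 0) i = 0 := by
  have hsum (i : ℕ) (hi : i + r ≤ d) :
      ∑ j : Fin (r + 1), c ⟨i + j, by omega⟩ * F.coeff j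
        = Polynomial.aeval shift F (fun k => if h : k < d + 1 then c ⟨k, h⟩ else 0) i := by
    rw [aeval_shift_apply hF, ← Fin.sum_univ_eq_sum_range]
    refine Finset.sum_congr rfl fun j _ => ?_
    rw [dif_pos (by omega), mul_comm]
  refine ⟨fun h i hi => ?_, fun h i => ?_⟩
  · rw [← hsum i hi]
    exact h ⟨i, by omega⟩
  · rw [hsum i (by omega)]
    exact h i (by omega)

end Shift

section Sylvester

variable {K : Type*} [Field K]

theorem aeval_shift_eq_zero_of_eq_sum_pow {ι : Type*} [Fintype ι] {F : Polynomial K} {r d : ℕ}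
    (hF : F.natDegree ≤ r) (a b lam : ι → K)
    (hroot : ∀ j, eval ![a j, b j] (F.homogenize r) = 0) (c : ℕ → K)
    (hc : ∀ k ≤ d, c k = ∑ j, lam j * a j ^ k * b j ^ (d - k)) {i : ℕ} (hi : i + r ≤ d) :
    Polynomial.aeval shift F c i = 0 := by
  have hroot' : ∀ j, ∑ ℓ ∈ Finset.range (r + 1), F.coeff ℓ * a j ^ ℓ * b j ^ (r - ℓ) = 0 := by
    intro j
    simpa [homogenize_eq_binaryForm hF, eval_binaryForm, Fin.sum_univ_eq_sum_range
      (fun ℓ => F.coeff ℓ * a j ^ ℓ * b j ^ (r - ℓ))] using hroot j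
  calc Polynomial.aeval shift F c i
      = ∑ ℓ ∈ Finset.range (r + 1), ∑ j,
          lam j * a j ^ i * b j ^ (d - r - i) * (F.coeff ℓ * a j ^ ℓ * b j ^ (r - ℓ)) := by
        rw [aeval_shift_apply hF]
        refine Finset.sum_congr rfl fun ℓ hℓ => ?_
        have hℓ : ℓ ≤ r := Nat.lt_succ_iff.mp (Finset.mem_range.mp hℓ)
        rw [hc _ (by omega), Finset.mul_sum]
        refine Finset.sum_congr rfl fun j _ => ?_
        rw [show d - (i + ℓ) = (d - r - i) + (r - ℓ) by omega, pow_add, pow_add]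
        ring
    _ = ∑ j, lam j * a j ^ i * b j ^ (d - r - i)
          * ∑ ℓ ∈ Finset.range (r + 1), F.coeff ℓ * a j ^ ℓ * b j ^ (r - ℓ) := by
        rw [Finset.sum_comm]
        simp only [Finset.mul_sum]
    _ = 0 := by simp [hroot']

lemma exists_eq_mul_pow_of_recurrence {a b : K} (hab : (a, b) ≠ 0) {d : ℕ} {s : ℕ → K}
    (hs : ∀ k < d, b * s (k + 1) = a * s k) : ∃ μ, ∀ k ≤ d, s k = μ * a ^ k * b ^ (d - k) := by
  by_cases hb : b = 0
  · -- `s` is supported at `k = d`, where `b ^ (d - k) = 0 ^ 0 = 1`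
    have ha : a ≠ 0 := fun ha => hab (by simp [ha, hb])
    refine ⟨s d / a ^ d, fun k hk => ?_⟩
    rcases hk.lt_or_eq with hk | rfl
    · have hsk : s k = 0 := by simpa [hb, ha] using (hs k hk).symm
      simp [hb, hsk, (Nat.sub_pos_of_lt hk).ne']
    · field_simp
      simp
  · have key : ∀ k ≤ d, s k * b ^ k = s 0 * a ^ k := by
      intro k hk
      induction k with
      | zero => simp
      | succ k ih =>
        calc s (k + 1) * b ^ (k + 1) = b * s (k + 1) * b ^ k := by ring
          _ = s 0 * a ^ (k + 1) := by rw [hs k hk, mul_assoc, ih (by omega)]; ring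
    refine ⟨s 0 / b ^ d, fun k hk => ?_⟩
    rw [← Nat.add_sub_cancel' hk, pow_add, Nat.add_sub_cancel_left]
    field_simp
    exact key k hk

lemma exists_eq_mul_pow_add_sum_pow_of_recurrence {ι : Type*} [Fintype ι] {a₀ b₀ : K}
    (hab₀ : (a₀, b₀) ≠ 0) (a b lam : ι → K) (hne : ∀ j, b₀ * a j - a₀ * b j ≠ 0) {d : ℕ}
    {c : ℕ → K} (hc : ∀ k ≤ d, b₀ * c (k + 1) - a₀ * c k = ∑ j, lam j * a j ^ k * b j ^ (d - k)) :
    ∃ (μ : K) (lam' : ι → K), ∀ k ≤ d + 1,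
      c k = μ * a₀ ^ k * b₀ ^ (d + 1 - k) + ∑ j : ι, lam' j * a j ^ k * b j ^ (d + 1 - k) := by
  set lam' := fun j => lam j / (b₀ * a j - a₀ * b j)
  have hterm (k : ℕ) (hk : k ≤ d) (j : ι) :
      b₀ * (lam' j * a j ^ (k + 1) * b j ^ (d + 1 - (k + 1)))
        - a₀ * (lam' j * a j ^ k * b j ^ (d + 1 - k))
      = lam j * a j ^ k * b j ^ (d - k) := by
    rw [Nat.add_sub_add_right, Nat.sub_add_comm hk, pow_succ, pow_succ]
    simp only [lam']
    field_simp [hne j]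
  obtain ⟨μ, hμ⟩ := exists_eq_mul_pow_of_recurrence hab₀ (d := d + 1)
    (s := fun k => c k - ∑ j, lam' j * a j ^ k * b j ^ (d + 1 - k)) fun k hk => by
      rw [← sub_eq_zero]
      calc b₀ * (c (k + 1) - ∑ j, lam' j * a j ^ (k + 1) * b j ^ (d + 1 - (k + 1)))
            - a₀ * (c k - ∑ j, lam' j * a j ^ k * b j ^ (d + 1 - k))
          = (b₀ * c (k + 1) - a₀ * c k)
            - ∑ j, (b₀ * (lam' j * a j ^ (k + 1) * b j ^ (d + 1 - (k + 1)))
              - a₀ * (lam' j * a j ^ k * b j ^ (d + 1 - k))) := by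
            rw [Finset.sum_sub_distrib, ← Finset.mul_sum, ← Finset.mul_sum]
            ring
        _ = 0 := by
            rw [hc k (by omega), Finset.sum_congr rfl fun j _ => hterm k (by omega) j, sub_self]
  exact ⟨μ, lam', fun k hk => by linear_combination hμ k hk⟩

theorem exists_eq_sum_pow_of_aeval_shift_eq_zero {r d : ℕ} (hrd : r ≤ d) (a b : Fin r → K)
    (hab : ∀ j, (a j, b j) ≠ 0) (hdist : ∀ j k, j ≠ k → a j * b k ≠ a k * b j) (c : ℕ → K)
    (hc : ∀ i, i + r ≤ d → Polynomial.aeval shift (projNodal a b) c i = 0) :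
    ∃ lam : Fin r → K, ∀ k ≤ d, c k = ∑ j, lam j * a j ^ k * b j ^ (d - k) := by
  induction r generalizing d c with
  | zero => exact ⟨0, fun k hk => by simpa [projNodal] using hc k (by omega)⟩
  | succ r ih =>
    obtain ⟨d, rfl⟩ : ∃ d', d = d' + 1 := ⟨d - 1, by omega⟩
    set P := Polynomial.C (b 0) * Polynomial.X - Polynomial.C (a 0)
    have hsplit : projNodal a b
        = projNodal (fun j : Fin r => a j.succ) (fun j : Fin r => b j.succ) * P := by
      rw [projNodal, Fin.prod_univ_succ, mul_comm]
      rfl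
    obtain ⟨lam, hlam⟩ := ih (d := d) (by omega) (fun j : Fin r => a j.succ)
      (fun j : Fin r => b j.succ) (fun j => hab _)
      (fun j k hjk => hdist _ _ (Fin.succ_injective _ |>.ne hjk)) (Polynomial.aeval shift P c)
      fun i hi => by
        rw [← Module.End.mul_apply, ← map_mul, ← hsplit]
        exact hc i (by omega)
    have hne (j : Fin r) : b 0 * a j.succ - a 0 * b j.succ ≠ 0 := by
      rw [sub_ne_zero, mul_comm]
      exact (hdist 0 j.succ (Fin.succ_ne_zero j).symm).symm
    obtain ⟨μ, lam', hμ⟩ := exists_eq_mul_pow_add_sum_pow_of_recurrence (hab 0) _ _ lam hne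
      fun k hk => by rw [← aeval_shift_C_mul_X_sub_C_apply, hlam k hk]
    refine ⟨Fin.cons μ lam', fun k hk => ?_⟩
    rw [Fin.sum_univ_succ]
    exact hμ k hk

end Sylvester

/-- Sylvester's theorem for binary forms. -/
theorem binary_form_decomposition (d r : ℕ) (hr : r ≤ d) (c : Fin (d + 1) → ℂ) :
    (∃ (α β lam : Fin r → ℂ),
      (∀ j, (α j, β j) ≠ (0, 0)) ∧
      (∀ j k, j ≠ k → α j * β k ≠ α k * β j) ∧
      (∑ i : Fin (d + 1), C ((d.choose i) * c i) * X 0 ^ (i : ℕ) * X 1 ^ (d - (i : ℕ))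
          : MvPolynomial (Fin 2) ℂ)
        = ∑ j, C (lam j) * (C (α j) * X 0 + C (β j) * X 1) ^ d) ↔
    (∃ q : Fin (r + 1) → ℂ, q ≠ 0 ∧
      (∀ i : Fin (d - r + 1), ∑ j : Fin (r + 1),
          c ⟨(i : ℕ) + (j : ℕ), by have hi := i.isLt; have hj := j.isLt; omega⟩ * q j = 0) ∧
      ∃ a b : Fin r → ℂ,
        (∀ j k, j ≠ k → a j * b k ≠ a k * b j) ∧
        (∑ ℓ : Fin (r + 1), C (q ℓ) * X 0 ^ (ℓ : ℕ) * X 1 ^ (r - (ℓ : ℕ))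
            : MvPolynomial (Fin 2) ℂ)
          = ∏ j, (C (b j) * X 0 - C (a j) * X 1)) := by
  set c' : ℕ → ℂ := fun k => if h : k < d + 1 then c ⟨k, h⟩ else 0
  have hdeg (a b : Fin r → ℂ) : (projNodal a b).natDegree ≤ r := by
    simpa using natDegree_projNodal_le a b
  have hhom (a b : Fin r → ℂ) :
      (projNodal a b).homogenize r = ∏ j, (C (b j) * X 0 - C (a j) * X 1) := by
    simpa using homogenize_projNodal a b
  constructor
  · rintro ⟨α, β, lam, hnz, hdist, hsum⟩
    have hc := (binaryForm_choose_mul_eq_sum_linear_pow_iff c α β lam).mp hsum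
    refine ⟨fun ℓ => (projNodal α β).coeff ℓ, ?_, ?_, α, β, hdist, ?_⟩
    · rw [Ne, fin_coeff_eq_zero_iff (hdeg α β)]
      exact (projNodal_ne_zero_iff α β).mpr hnz
    · refine (hankel_iff_aeval_shift hr c (hdeg α β)).mpr fun i hi =>
        aeval_shift_eq_zero_of_eq_sum_pow (hdeg α β) α β lam (fun j => ?_) c' (fun k hk => ?_) hi
      · simpa using eval_homogenize_projNodal α β j
      · simpa [c', hk] using hc ⟨k, by omega⟩
    · rw [← hhom, homogenize_eq_binaryForm (hdeg α β)]
      rfl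
  · rintro ⟨q, hq, hker, a, b, hdist, hprod⟩
    obtain rfl : q = fun ℓ : Fin (r + 1) => (projNodal a b).coeff ℓ := by
      apply binaryForm_injective r
      rw [← homogenize_eq_binaryForm (hdeg a b), hhom]
      exact hprod
    rw [Ne, fin_coeff_eq_zero_iff (hdeg a b), ← Ne, projNodal_ne_zero_iff] at hq
    obtain ⟨lam, hlam⟩ := exists_eq_sum_pow_of_aeval_shift_eq_zero hr a b hq hdist c'
      ((hankel_iff_aeval_shift hr c (hdeg a b)).mp hker)
    refine ⟨a, b, lam, hq, hdist,
      (binaryForm_choose_mul_eq_sum_linear_pow_iff c a b lam).mpr fun i => ?_⟩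
    simpa [c', Fin.is_le] using hlam i (by omega)
end

section
/- Let Λ ∈ R* with Hankel operator H_Λ of finite rank. Then the dual space of the quotient algebra A_Λ = R/I_Λ can be identified with the inverse system D = {q ⋆ Λ : q ∈ R}, and A_Λ is a Gorenstein algebra (i.e., its dual is a free A_Λ-module of rank 1 generated by Λ). -/
open MvPolynomial

/-- The Hankel operator `H_Λ : p ↦ (q ↦ Λ(pq))`. -/
noncomputable def hankelOp (K : Type*) [Field K] (n : ℕ)
    (Λ : Module.Dual K (MvPolynomial (Fin n) K)) :
    MvPolynomial (Fin n) K →ₗ[K] Module.Dual K (MvPolynomial (Fin n) K) :=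
  (LinearMap.mul K (MvPolynomial (Fin n) K)).compr₂ Λ

/-- The kernel ideal `I_Λ = {p : ∀ q, Λ(pq) = 0}`. -/
def hankelIdeal (K : Type*) [Field K] (n : ℕ)
    (Λ : Module.Dual K (MvPolynomial (Fin n) K)) : Ideal (MvPolynomial (Fin n) K) where
  carrier := {p | ∀ q, Λ (p * q) = 0}
  add_mem' := by
    intro a b ha hb q
    rw [Set.mem_setOf_eq] at ha hb
    rw [add_mul, map_add, ha q, hb q, add_zero]
  zero_mem' := by
    intro q
    rw [zero_mul, map_zero]
  smul_mem' := by
    intro c p hp q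
    rw [Set.mem_setOf_eq] at hp
    have h : (c • p) * q = p * (c * q) := by rw [smul_eq_mul]; ring
    rw [h]
    exact hp _

/-- The evaluation functional `1_ζ : p ↦ p(ζ)`. -/
noncomputable def evalDual (K : Type*) [Field K] (n : ℕ) (ζ : Fin n → K) :
    Module.Dual K (MvPolynomial (Fin n) K) :=
  (MvPolynomial.aeval ζ).toLinearMap

/-!
A finite-dimensional subspace `W` of `V*` is the annihilator of its coannihilator
`W^⊥ = {v : ∀ φ ∈ W, φ v = 0}`. For `W = range H_Λ` the coannihilator is `ker H_Λ = I_Λ`, because the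
form `(p, q) ↦ Λ(pq)` is symmetric. Hence `range H_Λ = I_Λ^⊥`, which is the image of `(R/I_Λ)*` in `R*`.
The Gorenstein property is the defining property of `I_Λ`: `p` dies in `R/I_Λ` as soon as `Λ(p ·) = 0`.
-/

namespace LinearMap

variable {K V : Type*} [Field K] [AddCommGroup V] [Module K V]

theorem IsRefl.ker_eq_dualCoannihilator_range {H : V →ₗ[K] Module.Dual K V} (hH : H.IsRefl) :
    ker H = (range H).dualCoannihilator := by
  ext q
  simp only [mem_ker, Submodule.mem_dualCoannihilator, mem_range, forall_exists_index,
    forall_apply_eq_imp_iff]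
  exact ⟨fun hq p => hH q p (by rw [hq, zero_apply]), fun hq => ext fun p => hH p q (hq p)⟩

theorem IsRefl.range_eq_dualAnnihilator_ker {H : V →ₗ[K] Module.Dual K V} (hH : H.IsRefl)
    [FiniteDimensional K (range H)] : range H = (ker H).dualAnnihilator := by
  rw [hH.ker_eq_dualCoannihilator_range, Subspace.dualCoannihilator_dualAnnihilator_eq]

end LinearMap

section Hankel

variable {K : Type*} [Field K] {n : ℕ} (Λ : Module.Dual K (MvPolynomial (Fin n) K))

@[simp]
theorem hankelOp_apply (p q : MvPolynomial (Fin n) K) : hankelOp K n Λ p q = Λ (p * q) :=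
  rfl

theorem mem_hankelIdeal {p : MvPolynomial (Fin n) K} :
    p ∈ hankelIdeal K n Λ ↔ ∀ q, Λ (p * q) = 0 :=
  Iff.rfl

theorem hankelOp_isSymm : (hankelOp K n Λ).IsSymm :=
  LinearMap.isSymm_def.mpr fun p q => by simp only [RingHom.id_apply, hankelOp_apply, mul_comm]

theorem ker_hankelOp : LinearMap.ker (hankelOp K n Λ) = (hankelIdeal K n Λ).restrictScalars K := by
  ext p
  simp only [LinearMap.mem_ker, Submodule.restrictScalars_mem, mem_hankelIdeal, LinearMap.ext_iff,
    hankelOp_apply, LinearMap.zero_apply]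

theorem ker_mkₐ_hankelIdeal :
    LinearMap.ker (Ideal.Quotient.mkₐ K (hankelIdeal K n Λ)).toLinearMap =
      LinearMap.ker (hankelOp K n Λ) := by
  ext p
  rw [ker_hankelOp, LinearMap.mem_ker, AlgHom.toLinearMap_apply, Ideal.Quotient.mkₐ_eq_mk,
    Ideal.Quotient.eq_zero_iff_mem, Submodule.restrictScalars_mem]

end Hankel

/-- The dual of `A_Λ = R/I_Λ` is identified with the inverse system `D = {q ⋆ Λ}`,
and `A_Λ` is Gorenstein (the induced bilinear form on the quotient is non-degenerate). -/
theorem dual_eq_inverse_system_and_gorenstein (K : Type*) [Field K] (n : ℕ)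
    (Λ : Module.Dual K (MvPolynomial (Fin n) K))
    (hfin : Module.Finite K ↥(LinearMap.range (hankelOp K n Λ))) :
    LinearMap.range ((Ideal.Quotient.mkₐ K (hankelIdeal K n Λ)).toLinearMap.dualMap)
      = LinearMap.range (hankelOp K n Λ) ∧
    ∀ p : MvPolynomial (Fin n) K, (∀ q, Λ (p * q) = 0) →
      Ideal.Quotient.mk (hankelIdeal K n Λ) p = 0 := by
  refine ⟨?_, fun p hp => Ideal.Quotient.eq_zero_iff_mem.mpr ((mem_hankelIdeal Λ).mpr hp)⟩
  rw [LinearMap.range_dualMap_eq_dualAnnihilator_ker, ker_mkₐ_hankelIdeal,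
    (hankelOp_isSymm Λ).isRefl.range_eq_dualAnnihilator_ker]
end

section
/- Suppose rank(H_Λ) = r < ∞ and B = {b_1,...,b_r} ⊂ R is such that the r×r matrix (Λ(b_i b_j))_{i,j} is invertible. Then the images of b_1,...,b_r form a basis of the quotient algebra A_Λ = R/I_Λ, i.e., R = ⟨B⟩ ⊕ I_Λ. -/
open MvPolynomial

/-!
The Gram matrix `(Λ(b_i b_j))` is the matrix of the functionals `H_Λ(b_i)` evaluated at the
`b_j`, so its invertibility makes `H_Λ(b_1), …, H_Λ(b_r)` linearly independent. Being `r`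
independent vectors in the `r`-dimensional space `im H_Λ`, they span it. Hence `H_Λ` maps
`⟨B⟩` onto its image and meets its kernel only in `0`, i.e. `R = ⟨B⟩ ⊕ ker H_Λ`.
-/

theorem Module.Dual.linearIndependent_of_isUnit_det_apply {R V ι : Type*} [CommRing R]
    [AddCommGroup V] [Module R V] [Fintype ι] [DecidableEq ι] (φ : ι → Module.Dual R V)
    (v : ι → V) (h : IsUnit (Matrix.of fun i j => φ i (v j)).det) : LinearIndependent R φ :=
  LinearIndependent.of_comp (LinearMap.pi fun j => LinearMap.applyₗ (v j))
    (Matrix.linearIndependent_rows_of_isUnit ((Matrix.isUnit_iff_isUnit_det _).2 h))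

namespace LinearMap

theorem codisjoint_span_ker_of_range_le {R V W : Type*} [Ring R] [AddCommGroup V] [Module R V]
    [AddCommGroup W] [Module R W] (f : V →ₗ[R] W) {s : Set V}
    (h : range f ≤ Submodule.span R (f '' s)) : Codisjoint (Submodule.span R s) (ker f) := by
  rw [codisjoint_iff, ← Submodule.comap_map_eq, Submodule.map_span, ← range_le_iff_comap]
  exact h

variable {K V W ι : Type*} [Field K] [AddCommGroup V] [Module K V] [AddCommGroup W] [Module K W]
  [Fintype ι] {f : V →ₗ[K] W} [FiniteDimensional K (range f)] {b : ι → V}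

theorem span_range_comp_eq_range (hli : LinearIndependent K (f ∘ b))
    (hcard : Module.finrank K (range f) = Fintype.card ι) :
    Submodule.span K (Set.range (f ∘ b)) = range f := by
  refine Submodule.eq_of_le_of_finrank_eq ?_ (by rw [finrank_span_eq_card hli, hcard])
  rw [Submodule.span_le, Set.range_comp]
  exact Set.image_subset_range f _

theorem isCompl_span_ker_of_linearIndependent_comp (hli : LinearIndependent K (f ∘ b))
    (hcard : Module.finrank K (range f) = Fintype.card ι) :
    IsCompl (Submodule.span K (Set.range b)) (ker f) :=
  ⟨Submodule.range_ker_disjoint hli, codisjoint_span_ker_of_range_le f <| by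
    rw [← Set.range_comp, span_range_comp_eq_range hli hcard]⟩

end LinearMap

/-- If `rank H_Λ = r` and the matrix `(Λ(b_i b_j))` is invertible, then `b_1, ..., b_r`
is a basis of `A_Λ`, i.e. `R = ⟨B⟩ ⊕ I_Λ`. -/
theorem basis_of_invertible_hankel_minor (K : Type*) [Field K] (n r : ℕ)
    (Λ : Module.Dual K (MvPolynomial (Fin n) K))
    (hfin : Module.Finite K ↥(LinearMap.range (hankelOp K n Λ)))
    (hrank : Module.finrank K ↥(LinearMap.range (hankelOp K n Λ)) = r)
    (b : Fin r → MvPolynomial (Fin n) K)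
    (hB : IsUnit (Matrix.of fun i j => Λ (b i * b j)).det) :
    IsCompl (Submodule.span K (Set.range b)) (LinearMap.ker (hankelOp K n Λ)) := by
  have hli : LinearIndependent K (hankelOp K n Λ ∘ b) :=
    Module.Dual.linearIndependent_of_isUnit_det_apply _ b hB
  exact LinearMap.isCompl_span_ker_of_linearIndependent_comp hli (by rw [hrank, Fintype.card_fin])
end

section
/- Suppose rank(H_Λ) = r < ∞, B = {b_1,...,b_r} ⊂ R with (Λ(b_i b_j)) invertible, and 1 ∈ ⟨B⟩. Then the ideal I_Λ = ker H_Λ is generated by the kernel of the restricted Hankel operator on ⟨B^+⟩, where B^+ = B ∪ x_1 B ∪ ... ∪ x_n B. -/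
open MvPolynomial

/-- If `rank H_Λ = r`, `(Λ(b_i b_j))` is invertible and `1 ∈ ⟨B⟩`, then the ideal `I_Λ`
is generated by the kernel of the Hankel operator restricted to `⟨B⁺⟩`. -/
theorem hankel_ideal_generated_by_Bplus_kernel (K : Type*) [Field K] (n r : ℕ)
    (Λ : Module.Dual K (MvPolynomial (Fin n) K))
    (hfin : Module.Finite K ↥(LinearMap.range (hankelOp K n Λ)))
    (hrank : Module.finrank K ↥(LinearMap.range (hankelOp K n Λ)) = r)
    (b : Fin r → MvPolynomial (Fin n) K)
    (hB : IsUnit (Matrix.of fun i j => Λ (b i * b j)).det)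
    (h1 : (1 : MvPolynomial (Fin n) K) ∈ Submodule.span K (Set.range b))
    (Bplus : Submodule K (MvPolynomial (Fin n) K))
    (hBplus : Bplus = Submodule.span K
      (Set.range b ∪ ⋃ i : Fin n, (fun p => (X i : MvPolynomial (Fin n) K) * p) '' Set.range b)) :
    hankelIdeal K n Λ
      = Ideal.span {p : MvPolynomial (Fin n) K | p ∈ Bplus ∧ ∀ q ∈ Bplus, Λ (p * q) = 0} := by
  classical
  haveI := hfin
  set G : Matrix (Fin r) (Fin r) K := Matrix.of fun i j => Λ (b i * b j) with hGdef
  have hGapply : ∀ i j, G i j = Λ (b i * b j) := fun i j => rfl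
  -- Gram injectivity
  have gram_inj : ∀ d : Fin r → K, (∀ k, ∑ i, d i * Λ (b i * b k) = 0) → d = 0 := by
    intro d hd
    have hv : Matrix.vecMul d G = 0 := by
      funext k
      simpa [Matrix.vecMul, dotProduct, hGapply] using hd k
    have hd2 : d = Matrix.vecMul (Matrix.vecMul d G) G⁻¹ := by
      rw [Matrix.vecMul_vecMul, Matrix.mul_nonsing_inv _ hB, Matrix.vecMul_one]
    rw [hv, Matrix.zero_vecMul] at hd2
    exact hd2
  have hHapp : ∀ p q : MvPolynomial (Fin n) K, hankelOp K n Λ p q = Λ (p * q) :=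
    fun _ _ => rfl
  have hHb_indep : LinearIndependent K (fun i => hankelOp K n Λ (b i)) := by
    rw [Fintype.linearIndependent_iff]
    intro g hg
    have hg0 : g = 0 := by
      apply gram_inj
      intro k
      have := DFunLike.congr_fun hg (b k)
      simpa [hHapp] using this
    intro i; rw [hg0]; rfl
  have hrange_le : Submodule.span K (Set.range fun i => hankelOp K n Λ (b i))
      ≤ LinearMap.range (hankelOp K n Λ) := by
    rw [Submodule.span_le]
    rintro _ ⟨i, rfl⟩
    exact LinearMap.mem_range_self _ _
  have hspan : Submodule.span K (Set.range fun i => hankelOp K n Λ (b i))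
      = LinearMap.range (hankelOp K n Λ) := by
    apply Submodule.eq_of_le_of_finrank_le hrange_le
    rw [hrank, finrank_span_eq_card hHb_indep, Fintype.card_fin]
  have keyB : ∀ x : MvPolynomial (Fin n) K, (∀ k, Λ (x * b k) = 0) → ∀ q, Λ (x * q) = 0 := by
    intro x hx q
    have hmem : hankelOp K n Λ x ∈ Submodule.span K (Set.range fun i => hankelOp K n Λ (b i)) := by
      rw [hspan]; exact LinearMap.mem_range_self _ _
    obtain ⟨c, hc⟩ := (Submodule.mem_span_range_iff_exists_fun K).1 hmem
    have hc0 : c = 0 := by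
      apply gram_inj
      intro k
      have := DFunLike.congr_fun hc (b k)
      simpa [hHapp, hx k] using this
    have h0 : hankelOp K n Λ x = 0 := by
      rw [← hc, hc0]; simp
    have := DFunLike.congr_fun h0 q
    simpa [hHapp] using this
  -- the projection onto the span of b
  set pr : MvPolynomial (Fin n) K → MvPolynomial (Fin n) K :=
    fun p => ∑ i, Matrix.vecMul (fun j => Λ (p * b j)) G⁻¹ i • b i with hprdef
  have hpr_mem : ∀ p, pr p ∈ Submodule.span K (Set.range b) := by
    intro p
    exact Submodule.sum_mem _ fun i _ => Submodule.smul_mem _ _ (Submodule.subset_span ⟨i, rfl⟩)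
  have hpr_eq : ∀ p k, Λ (pr p * b k) = Λ (p * b k) := by
    intro p k
    have h1' : Λ (pr p * b k)
        = ∑ i, Matrix.vecMul (fun j => Λ (p * b j)) G⁻¹ i * Λ (b i * b k) := by
      simp [hprdef, Finset.sum_mul, smul_mul_assoc]
    have h2' : ∑ i, Matrix.vecMul (fun j => Λ (p * b j)) G⁻¹ i * Λ (b i * b k)
        = Matrix.vecMul (Matrix.vecMul (fun j => Λ (p * b j)) G⁻¹) G k := by
      simp [Matrix.vecMul, dotProduct, hGapply]
    rw [h1', h2', Matrix.vecMul_vecMul, Matrix.nonsing_inv_mul _ hB, Matrix.vecMul_one]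
  have hpr_ker : ∀ p q, Λ ((p - pr p) * q) = 0 := by
    intro p
    apply keyB
    intro k
    rw [sub_mul, map_sub, hpr_eq, sub_self]
  -- membership facts about Bplus
  have hb_mem : ∀ i, b i ∈ Bplus := by
    intro i
    rw [hBplus]
    exact Submodule.subset_span (Or.inl ⟨i, rfl⟩)
  have hXb_mem : ∀ (i : Fin n) (j : Fin r), (X i : MvPolynomial (Fin n) K) * b j ∈ Bplus := by
    intro i j
    rw [hBplus]
    exact Submodule.subset_span (Or.inr (Set.mem_iUnion.2 ⟨i, ⟨b j, ⟨j, rfl⟩, rfl⟩⟩))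
  have hspanb_le : Submodule.span K (Set.range b) ≤ Bplus := by
    rw [Submodule.span_le]
    rintro _ ⟨i, rfl⟩
    exact hb_mem i
  have hKI : ∀ p ∈ {p : MvPolynomial (Fin n) K | p ∈ Bplus ∧ ∀ q ∈ Bplus, Λ (p * q) = 0},
      ∀ q, Λ (p * q) = 0 := by
    rintro p ⟨hpB, hpq⟩ q
    exact keyB p (fun k => hpq (b k) (hb_mem k)) q
  have hJ_le : Ideal.span {p : MvPolynomial (Fin n) K | p ∈ Bplus ∧ ∀ q ∈ Bplus, Λ (p * q) = 0}
      ≤ hankelIdeal K n Λ := by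
    rw [Ideal.span_le]
    intro p hp
    exact hKI p hp
  have reduce : ∀ p ∈ Bplus, ∃ t ∈ Submodule.span K (Set.range b),
      p - t ∈ Ideal.span {p : MvPolynomial (Fin n) K | p ∈ Bplus ∧ ∀ q ∈ Bplus, Λ (p * q) = 0} := by
    intro p hp
    refine ⟨pr p, hpr_mem p, Ideal.subset_span ?_⟩
    exact ⟨Submodule.sub_mem _ hp (hspanb_le (hpr_mem p)), fun q _ => hpr_ker p q⟩
  have main : ∀ p : MvPolynomial (Fin n) K, ∃ s ∈ Submodule.span K (Set.range b),
      p - s ∈ Ideal.span {p : MvPolynomial (Fin n) K | p ∈ Bplus ∧ ∀ q ∈ Bplus, Λ (p * q) = 0} := by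
    intro p
    induction p using MvPolynomial.induction_on with
    | C a =>
        refine ⟨C a, ?_, by simpa using (Ideal.span _).zero_mem⟩
        have hCa : (C a : MvPolynomial (Fin n) K) = a • 1 := by
          rw [smul_eq_C_mul, mul_one]
        rw [hCa]
        exact Submodule.smul_mem _ _ h1
    | add p q hp hq =>
        obtain ⟨s1, hs1, hJ1⟩ := hp
        obtain ⟨s2, hs2, hJ2⟩ := hq
        refine ⟨s1 + s2, Submodule.add_mem _ hs1 hs2, ?_⟩
        have heq : p + q - (s1 + s2) = (p - s1) + (q - s2) := by ring
        rw [heq]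
        exact Ideal.add_mem _ hJ1 hJ2
    | mul_X p i hp =>
        obtain ⟨s1, hs1, hJ1⟩ := hp
        have hXs : (X i : MvPolynomial (Fin n) K) * s1 ∈ Bplus := by
          have hmap : (X i : MvPolynomial (Fin n) K) * s1
              ∈ Submodule.map (LinearMap.mulLeft K (X i : MvPolynomial (Fin n) K))
                (Submodule.span K (Set.range b)) := ⟨s1, hs1, rfl⟩
          rw [Submodule.map_span] at hmap
          refine Submodule.span_le.2 ?_ hmap
          rintro _ ⟨_, ⟨j, rfl⟩, rfl⟩
          simpa [LinearMap.mulLeft_apply] using hXb_mem i j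
        obtain ⟨t, ht, htJ⟩ := reduce _ hXs
        refine ⟨t, ht, ?_⟩
        have heq : p * X i - t = (p - s1) * X i + ((X i : MvPolynomial (Fin n) K) * s1 - t) := by
          ring
        rw [heq]
        exact Ideal.add_mem _ (Ideal.mul_mem_right _ _ hJ1) htJ
  apply le_antisymm
  · intro p hp
    obtain ⟨s, hs, hpsJ⟩ := main p
    have hpI : ∀ q, Λ (p * q) = 0 := hp
    have hpsI : ∀ q, Λ ((p - s) * q) = 0 := hJ_le hpsJ
    have hsI : ∀ q, Λ (s * q) = 0 := by
      intro q
      have h := hpsI q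
      rw [sub_mul, map_sub, hpI q, zero_sub, neg_eq_zero] at h
      exact h
    obtain ⟨c, hc⟩ := (Submodule.mem_span_range_iff_exists_fun K).1 hs
    have hc0 : c = 0 := by
      apply gram_inj
      intro k
      have h := hsI (b k)
      rw [← hc] at h
      simpa [Finset.sum_mul, smul_mul_assoc] using h
    have hs0 : s = 0 := by
      rw [← hc, hc0]; simp
    rw [← sub_zero p, ← hs0]
    exact hpsJ
  · exact hJ_le
end

section
/- Suppose Λ = Σ_{i=1}^r λ_i 1_{ζ_i} with λ_i ≠ 0 and ζ_1,...,ζ_r pairwise distinct points of K^n. Then for any a ∈ R, the eigenvalues of the multiplication operator M_a on A_Λ = R/I_Λ are exactly {a(ζ_1),...,a(ζ_r)}, and the evaluation functionals 1_{ζ_i} (restricted to A_Λ) are eigenvectors of M_a^t with eigenvalue a(ζ_i). -/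
/-!
Since the points `ζ i` are distinct, interpolation makes evaluation at them a surjection
`R → K^r`, and since the weights `λ i` are nonzero its kernel is exactly `I_Λ`. Hence
`A_Λ ≃ₐ[K] K^r`, sending the class of `a` to `(a(ζ_1), …, a(ζ_r))`. In a finite-dimensional
algebra the eigenvalues of left multiplication by `x` form the spectrum of `x`, which algebra
isomorphisms preserve, and the spectrum of a vector of `K^r` is its set of coordinates.
-/

open MvPolynomial

section evalPoints

variable {K σ ι : Type*} [Field K]

noncomputable def evalPoints (ζ : ι → σ → K) : MvPolynomial σ K →ₐ[K] (ι → K) :=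
  AlgHom.pi fun i => aeval (ζ i)

@[simp]
lemma evalPoints_apply (ζ : ι → σ → K) (p : MvPolynomial σ K) (i : ι) :
    evalPoints ζ p i = eval (ζ i) p := by
  simp [evalPoints]

lemma exists_eval_eq_one_and_eval_eq_zero [Finite ι] {ζ : ι → σ → K}
    (hζ : Function.Injective ζ) (i : ι) :
    ∃ e : MvPolynomial σ K, eval (ζ i) e = 1 ∧ ∀ j ≠ i, eval (ζ j) e = 0 := by
  classical
  have := Fintype.ofFinite ι
  have separate (j : ι) :
      ∃ p : MvPolynomial σ K, eval (ζ i) p = 1 ∧ (j ≠ i → eval (ζ j) p = 0) := by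
    by_cases hj : j = i
    · exact ⟨1, by simp, fun h => (h hj).elim⟩
    obtain ⟨k, hk⟩ := Function.ne_iff.mp (hζ.ne hj)
    refine ⟨C (ζ i k - ζ j k)⁻¹ * (X k - C (ζ j k)), ?_, by simp⟩
    simp [inv_mul_cancel₀ (sub_ne_zero.mpr (Ne.symm hk))]
  choose p hp_one hp_zero using separate
  refine ⟨∏ j ∈ Finset.univ.erase i, p j, ?_, fun j hj => ?_⟩
  · simp [hp_one]
  · rw [map_prod]
    exact Finset.prod_eq_zero (Finset.mem_erase.mpr ⟨hj, Finset.mem_univ j⟩) (hp_zero j hj)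

lemma evalPoints_surjective [Finite ι] {ζ : ι → σ → K} (hζ : Function.Injective ζ) :
    Function.Surjective (evalPoints ζ) := by
  have := Fintype.ofFinite ι
  choose e he_one he_zero using exists_eval_eq_one_and_eval_eq_zero hζ
  refine fun v => ⟨∑ i, C (v i) * e i, funext fun j => ?_⟩
  rw [evalPoints_apply, map_sum,
    Finset.sum_eq_single j (fun i _ hi => by simp [he_zero i j hi.symm]) (by simp)]
  simp [he_one]

end evalPoints

lemma Pi.spectrum_eq_range {K ι : Type*} [Field K] (c : ι → K) :
    spectrum K c = Set.range c := by
  have spectrum_scalar (k : K) : spectrum K k = {k} := spectrum.scalar_eq k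
  simp [Pi.spectrum_eq, spectrum_scalar, Set.iUnion_singleton_eq_range]

lemma Module.End.hasEigenvalue_mulLeft_iff_mem_spectrum {K A : Type*} [Field K] [Ring A]
    [Algebra K A] [FiniteDimensional K A] (x : A) (μ : K) :
    HasEigenvalue (LinearMap.mulLeft K x) μ ↔ μ ∈ spectrum K x := by
  have hlmul : algebraMap K (End K A) μ - LinearMap.mulLeft K x
      = Algebra.lmul K A (algebraMap K A μ - x) := by
    rw [map_sub, AlgHom.commutes]; rfl
  rw [hasEigenvalue_iff_mem_spectrum, spectrum.mem_iff, spectrum.mem_iff, hlmul,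
    Algebra.lmul_isUnit_iff]

section hankel

variable {K : Type*} [Field K] {n r : ℕ} {Λ : Module.Dual K (MvPolynomial (Fin n) K)}
  {lam : Fin r → K} {ζ : Fin r → Fin n → K}

lemma evalDual_apply (x : Fin n → K) (p : MvPolynomial (Fin n) K) :
    evalDual K n x p = eval x p := by
  simp [evalDual]

lemma hankelOp_evalDual (x : Fin n → K) (a : MvPolynomial (Fin n) K) :
    hankelOp K n (evalDual K n x) a = eval x a • evalDual K n x := by
  ext p
  simp [hankelOp, evalDual_apply]

lemma hankelIdeal_eq_ker_evalPoints (hlam : ∀ i, lam i ≠ 0) (hζ : Function.Injective ζ)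
    (hΛ : Λ = ∑ i, lam i • evalDual K n (ζ i)) :
    hankelIdeal K n Λ = RingHom.ker (evalPoints ζ) := by
  have hΛ_mul (p q : MvPolynomial (Fin n) K) :
      Λ (p * q) = ∑ i, lam i * (eval (ζ i) p * eval (ζ i) q) := by
    simp [hΛ, evalDual_apply]
  ext p
  refine ⟨fun hp => funext fun i => ?_, fun hp q => ?_⟩
  · obtain ⟨q, hq⟩ := evalPoints_surjective hζ (Pi.single i 1)
    have hq_eval (j : Fin r) : eval (ζ j) q = Pi.single (M := fun _ => K) i 1 j := by
      rw [← hq, evalPoints_apply]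
    simpa [hΛ_mul, hq_eval, Pi.single_apply, hlam i] using hp q
  · have hp_eval (i : Fin r) : eval (ζ i) p = 0 := congr_fun hp i
    simp [hΛ_mul, hp_eval]

noncomputable def hankelQuotientEquiv (hlam : ∀ i, lam i ≠ 0) (hζ : Function.Injective ζ)
    (hΛ : Λ = ∑ i, lam i • evalDual K n (ζ i)) :
    (MvPolynomial (Fin n) K ⧸ hankelIdeal K n Λ) ≃ₐ[K] (Fin r → K) :=
  (Ideal.quotientEquivAlgOfEq K (hankelIdeal_eq_ker_evalPoints hlam hζ hΛ)).trans
    (Ideal.quotientKerAlgEquivOfSurjective (evalPoints_surjective hζ))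

lemma hankelQuotientEquiv_mk (hlam : ∀ i, lam i ≠ 0) (hζ : Function.Injective ζ)
    (hΛ : Λ = ∑ i, lam i • evalDual K n (ζ i)) (p : MvPolynomial (Fin n) K) :
    hankelQuotientEquiv hlam hζ hΛ (Ideal.Quotient.mk _ p) = fun i => eval (ζ i) p := by
  ext i
  exact evalPoints_apply ζ p i

end hankel

theorem eigenvalues_of_multiplication_operator_general (K : Type*) [Field K] (n r : ℕ)
    (Λ : Module.Dual K (MvPolynomial (Fin n) K))
    (lam : Fin r → K) (ζ : Fin r → (Fin n → K))
    (hlam : ∀ i, lam i ≠ 0) (hinj : Function.Injective ζ)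
    (hΛ : Λ = ∑ i, lam i • evalDual K n (ζ i))
    (a : MvPolynomial (Fin n) K) :
    (∀ μ : K,
      Module.End.HasEigenvalue
        (LinearMap.mulLeft K (Ideal.Quotient.mk (hankelIdeal K n Λ) a) :
          Module.End K (MvPolynomial (Fin n) K ⧸ hankelIdeal K n Λ)) μ
      ↔ ∃ i, μ = MvPolynomial.eval (ζ i) a) ∧
    (∀ i, hankelOp K n (evalDual K n (ζ i)) a
        = MvPolynomial.eval (ζ i) a • evalDual K n (ζ i)) := by
  let e := hankelQuotientEquiv hlam hinj hΛ
  have : FiniteDimensional K (MvPolynomial (Fin n) K ⧸ hankelIdeal K n Λ) :=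
    e.symm.toLinearEquiv.finiteDimensional
  refine ⟨fun μ => ?_, fun i => hankelOp_evalDual (ζ i) a⟩
  rw [Module.End.hasEigenvalue_mulLeft_iff_mem_spectrum, ← AlgEquiv.spectrum_eq e,
    hankelQuotientEquiv_mk, Pi.spectrum_eq_range]
  simp [eq_comm]

/-- If `Λ = Σ λ_i 1_{ζ_i}` with nonzero weights and distinct points, the eigenvalues of
the multiplication operator `M_a` on `A_Λ` are exactly the `a(ζ_i)`, and each `1_{ζ_i}` is
an eigenvector of `M_a^t` (i.e. `a ⋆ 1_{ζ_i} = a(ζ_i) • 1_{ζ_i}`). -/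
theorem eigenvalues_of_multiplication_operator (K : Type*) [Field K] [IsAlgClosed K] (n r : ℕ)
    (Λ : Module.Dual K (MvPolynomial (Fin n) K))
    (lam : Fin r → K) (ζ : Fin r → (Fin n → K))
    (hlam : ∀ i, lam i ≠ 0) (hinj : Function.Injective ζ)
    (hΛ : Λ = ∑ i, lam i • evalDual K n (ζ i))
    (a : MvPolynomial (Fin n) K) :
    (∀ μ : K,
      Module.End.HasEigenvalue
        (LinearMap.mulLeft K (Ideal.Quotient.mk (hankelIdeal K n Λ) a) :
          Module.End K (MvPolynomial (Fin n) K ⧸ hankelIdeal K n Λ)) μ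
      ↔ ∃ i, μ = MvPolynomial.eval (ζ i) a) ∧
    (∀ i, hankelOp K n (evalDual K n (ζ i)) a
        = MvPolynomial.eval (ζ i) a • evalDual K n (ζ i)) :=
  eigenvalues_of_multiplication_operator_general K n r Λ lam ζ hlam hinj hΛ a
end

section
/- Let Λ = Σ_{i=1}^r λ_i 1_{ζ_i} with λ_i ≠ 0 and ζ_i distinct points in K^n. Then the ideal I_Λ = ker H_Λ equals the vanishing ideal I(ζ_1,...,ζ_r) of the point set {ζ_1,...,ζ_r}, and in particular I_Λ is radical. -/
/-!
Distinct points of `K^n` are separated by affine-linear polynomials, and products of these give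
Lagrange polynomials `q_i` with `q_i(ζ_j) = δ_ij`. Testing `p ∈ I_Λ` against `q_i` gives
`Λ(p q_i) = λ_i p(ζ_i)`, so `p` vanishes at every `ζ_i` because `λ_i ≠ 0`; conversely such a `p`
kills every `Λ(p q)`. Radicality is then inherited from vanishing ideals, since `K` is reduced.
-/

open MvPolynomial

namespace MvPolynomial

variable {σ K : Type*} [Field K]

theorem isRadical_vanishingIdeal {k : Type*} [Field k] [Algebra k K] (V : Set (σ → K)) :
    (vanishingIdeal k V).IsRadical := by
  rintro p ⟨m, hm⟩ x hx
  have hpow : aeval x p ^ m = 0 := by rw [← map_pow]; exact hm x hx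
  exact eq_zero_of_pow_eq_zero hpow

theorem exists_eval_eq_one_and_eval_eq_zero {x y : σ → K} (hxy : x ≠ y) :
    ∃ q : MvPolynomial σ K, eval x q = 1 ∧ eval y q = 0 := by
  obtain ⟨k, hk⟩ := Function.ne_iff.mp hxy
  refine ⟨C (x k - y k)⁻¹ * (X k - C (y k)), ?_, by simp⟩
  simp [sub_ne_zero.mpr hk]

theorem exists_eval_eq_pi_single {ι : Type*} [Fintype ι] [DecidableEq ι] {ζ : ι → σ → K}
    (hζ : Function.Injective ζ) (i : ι) :
    ∃ q : MvPolynomial σ K, ∀ j, eval (ζ j) q = (Pi.single i 1 : ι → K) j := by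
  have hsep : ∀ j, j ≠ i → ∃ q : MvPolynomial σ K, eval (ζ i) q = 1 ∧ eval (ζ j) q = 0 :=
    fun j hj => exists_eval_eq_one_and_eval_eq_zero (hζ.ne (Ne.symm hj))
  choose q hq_one hq_zero using hsep
  refine ⟨∏ j, if h : j = i then 1 else q j h, fun j => ?_⟩
  rw [map_prod]
  by_cases hj : j = i
  · subst hj
    rw [Pi.single_eq_same]
    refine Finset.prod_eq_one fun k _ => ?_
    by_cases hk : k = j <;> simp [hk, hq_one]
  · rw [Pi.single_eq_of_ne hj]
    exact Finset.prod_eq_zero (Finset.mem_univ j) (by simp [hj, hq_zero])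

end MvPolynomial

section

variable {K : Type*} [Field K] {n : ℕ} {ι : Type*} [Fintype ι]

theorem sum_smul_evalDual_apply (lam : ι → K) (ζ : ι → Fin n → K)
    (p : MvPolynomial (Fin n) K) :
    (∑ i, lam i • evalDual K n (ζ i)) p = ∑ i, lam i * eval (ζ i) p := by
  simp [evalDual]

theorem hankelIdeal_sum_smul_evalDual {lam : ι → K} {ζ : ι → Fin n → K}
    (hlam : ∀ i, lam i ≠ 0) (hζ : Function.Injective ζ) :
    hankelIdeal K n (∑ i, lam i • evalDual K n (ζ i)) = vanishingIdeal K (Set.range ζ) := by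
  classical
  ext p
  rw [mem_vanishingIdeal_iff, Set.forall_mem_range]
  change (∀ q, _) ↔ ∀ j, eval (ζ j) p = 0
  constructor
  · intro hp j
    obtain ⟨q, hq⟩ := exists_eval_eq_pi_single hζ j
    simpa [sum_smul_evalDual_apply, hq, Pi.single_apply, hlam j] using hp q
  · intro hp q
    simp [sum_smul_evalDual_apply, hp]

end

/-- If `Λ = Σ λ_i 1_{ζ_i}` with nonzero weights and distinct points, then `I_Λ` is the
vanishing ideal of `{ζ_1, ..., ζ_r}`; in particular `I_Λ` is radical. -/
theorem hankel_kernel_eq_vanishing_ideal (K : Type*) [Field K] (n r : ℕ)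
    (Λ : Module.Dual K (MvPolynomial (Fin n) K))
    (lam : Fin r → K) (ζ : Fin r → (Fin n → K))
    (hlam : ∀ i, lam i ≠ 0) (hinj : Function.Injective ζ)
    (hΛ : Λ = ∑ i, lam i • evalDual K n (ζ i)) :
    (∀ p : MvPolynomial (Fin n) K,
        p ∈ hankelIdeal K n Λ ↔ ∀ i, MvPolynomial.eval (ζ i) p = 0) ∧
    (hankelIdeal K n Λ).IsRadical := by
  rw [hΛ, hankelIdeal_sum_smul_evalDual hlam hinj]
  refine ⟨fun p => ?_, isRadical_vanishingIdeal _⟩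
  rw [mem_vanishingIdeal_iff, Set.forall_mem_range]
  rfl
end

section
/- Let B be a finite set of monomials of degree ≤ d connected to 1, |B| = r, and let Λ be a linear form defined on the span of B·B^+ whose associated Hankel matrix H^B_Λ = (Λ(b b'))_{b,b'∈B} is invertible, and such that the formal multiplication operators M_i = (H^B_Λ)^{-1} H^B_{x_i⋆Λ} pairwise commute: M_i M_j = M_j M_i for all 1 ≤ i < j ≤ n. Then Λ admits a unique extension Λ̃ ∈ R* such that the Hankel operator H_{Λ̃} has rank r and B is a basis of A_{Λ̃} = R/I_{Λ̃}. -/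
/-!
Since the `M i` commute, `ψ p = p(M) v` (`coords`), with `v` the coordinate vector of `1 ∈ B`,
is a well-defined linear map `K[x] → K^B`, and connectedness of `B` to `1` gives `ψ b = e_b` for
`b ∈ B`. The extension is `Λ̃ p = vᵀ H ψ(p)`: because every `H p(M)` is symmetric,
`Λ̃ (p q) = ψ(p)ᵀ H ψ(q)`, so `ker H_Λ̃ = ker ψ`, a complement of `span B`.
Conversely, if `span B` is a complement of `ker H_Λ'` for an extension `Λ'`, pairing with `B`
shows `x_i σ(c) ≡ σ(M_i c)` modulo `ker H_Λ'`, where `σ c = ∑ c_b b` (`combination`); hence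
`p ≡ σ(ψ p)`, and `Λ' (p q) = ψ(p)ᵀ H ψ(q)` too, which forces `Λ' = Λ̃`.
-/

open MvPolynomial

open Matrix

namespace MvPolynomial

variable {R A σ : Type*} [CommSemiring R] [Semiring A] [Algebra R A]

open scoped IsMulCommutative in
noncomputable def aevalOfCommute (M : σ → A) (hM : ∀ i j, Commute (M i) (M j)) :
    MvPolynomial σ R →ₐ[R] A :=
  have := Algebra.isMulCommutative_adjoin R (s := Set.range M) <| by
    rintro _ ⟨i, rfl⟩ _ ⟨j, rfl⟩
    exact hM i j
  (Algebra.adjoin R (Set.range M)).val.comp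
    (aeval fun i => ⟨M i, Algebra.subset_adjoin ⟨i, rfl⟩⟩)

variable (M : σ → A) (hM : ∀ i j, Commute (M i) (M j))

@[simp]
theorem aevalOfCommute_X (i : σ) : aevalOfCommute M hM (X i : MvPolynomial σ R) = M i := by
  simp [aevalOfCommute]

theorem commute_aevalOfCommute (p q : MvPolynomial σ R) :
    Commute (aevalOfCommute M hM p) (aevalOfCommute M hM q) :=
  (Commute.all p q).map _

end MvPolynomial

theorem Matrix.IsSymm.mul_aevalOfCommute {K ι σ : Type*} [CommRing K] [Fintype ι]
    [DecidableEq ι] {S : Matrix ι ι K} {M : σ → Matrix ι ι K} (hM : ∀ i j, Commute (M i) (M j))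
    (hS : S.IsSymm) (hSM : ∀ i, (S * M i).IsSymm) (p : MvPolynomial σ K) :
    (S * aevalOfCommute M hM p).IsSymm := by
  induction p using MvPolynomial.induction_on with
  | C a =>
    rw [algHom_C, Algebra.algebraMap_eq_smul_one, mul_smul_comm, mul_one]
    exact hS.smul a
  | add p q hp hq => rw [map_add, mul_add]; exact hp.add hq
  | mul_X p i hp =>
    rw [map_mul, aevalOfCommute_X]
    calc (S * (aevalOfCommute M hM p * M i))ᵀ
        = (M i)ᵀ * (S * aevalOfCommute M hM p)ᵀ := by rw [← mul_assoc, transpose_mul]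
      _ = (S * M i)ᵀ * aevalOfCommute M hM p := by rw [hp.eq, transpose_mul, hS.eq, mul_assoc]
      _ = S * (aevalOfCommute M hM p * M i) := by
        rw [(hSM i).eq, mul_assoc, ← aevalOfCommute_X M hM i (R := K),
          (commute_aevalOfCommute M hM _ _).eq]

section HankelMatrix

variable {K A ι : Type*} [CommSemiring K] [CommSemiring A] [Algebra K A]

/-- `hankelMatrix Λ (x^B)` is the paper's `H^B_Λ`; `H^B_{x_i ⋆ Λ}` is
`hankelMatrix (Λ ∘ₗ LinearMap.mulLeft K (X i)) (x^B)`. -/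
def hankelMatrix (L : Module.Dual K A) (m : ι → A) : Matrix ι ι K :=
  Matrix.of fun j k => L (m j * m k)

theorem isSymm_hankelMatrix (L : Module.Dual K A) (m : ι → A) : (hankelMatrix L m).IsSymm := by
  ext j k
  simp [hankelMatrix, mul_comm]

theorem apply_linearCombination_mul [Fintype ι] (L : Module.Dual K A) (m : ι → A)
    (c c' : ι → K) :
    L (Fintype.linearCombination K m c * Fintype.linearCombination K m c') =
      c ⬝ᵥ hankelMatrix L m *ᵥ c' := by
  simp only [Fintype.linearCombination_apply, Finset.sum_mul, Finset.mul_sum, map_sum, dotProduct,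
    mulVec, hankelMatrix, of_apply, smul_mul_smul_comm, map_smul, smul_eq_mul]
  rw [Finset.sum_comm]
  exact Finset.sum_congr rfl fun j _ => Finset.sum_congr rfl fun k _ => by ring

end HankelMatrix

def IsConnectedToOne {ι σ : Type*} (b : ι → σ →₀ ℕ) : Prop :=
  ∀ j, b j = 0 ∨ ∃ i j', b j = Finsupp.single i 1 + b j'

namespace IsConnectedToOne

variable {ι σ : Type*} {b : ι → σ →₀ ℕ}

theorem induction (hb : IsConnectedToOne b) {P : ι → Prop} (zero : ∀ j, b j = 0 → P j)
    (step : ∀ i j j', b j = Finsupp.single i 1 + b j' → P j' → P j) (j : ι) : P j := by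
  induction h : (b j).degree using Nat.strong_induction_on generalizing j with
  | _ d ih =>
    rcases hb j with h0 | ⟨i, j', hj⟩
    · exact zero j h0
    · refine step i j j' hj (ih _ ?_ j' rfl)
      rw [← h, hj, map_add, Finsupp.degree_single]
      omega

theorem exists_eq_zero [Nonempty ι] (hb : IsConnectedToOne b) : ∃ j, b j = 0 :=
  hb.induction (P := fun _ => ∃ j, b j = 0) (fun j h => ⟨j, h⟩) (fun _ _ _ _ h => h)
    (Classical.arbitrary ι)

end IsConnectedToOne

theorem LinearMap.isCompl_range_ker_of_comp_eq_id {R V W : Type*} [Ring R] [AddCommGroup V]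
    [Module R V] [AddCommGroup W] [Module R W] {f : V →ₗ[R] W} {g : W →ₗ[R] V}
    (h : f ∘ₗ g = LinearMap.id) : IsCompl (LinearMap.range g) (LinearMap.ker f) := by
  have hidem : IsIdempotentElem (g ∘ₗ f) := by
    rw [IsIdempotentElem, Module.End.mul_eq_comp, LinearMap.comp_assoc,
      ← LinearMap.comp_assoc f, h, LinearMap.id_comp]
  have hsurj : LinearMap.range f = ⊤ :=
    LinearMap.range_eq_top.mpr fun w => ⟨g w, congrArg (· w) h⟩
  have hinj : LinearMap.ker g = ⊥ :=
    LinearMap.ker_eq_bot_of_inverse h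
  simpa [LinearMap.range_comp_of_range_eq_top g hsurj, LinearMap.ker_comp_of_ker_eq_bot f hinj]
    using LinearMap.IsIdempotentElem.isCompl hidem

noncomputable def LinearMap.rangeEquivOfIsCompl {R V W : Type*} [Ring R] [AddCommGroup V]
    [Module R V] [AddCommGroup W] [Module R W] (f : V →ₗ[R] W) {S : Submodule R V}
    (h : IsCompl S (LinearMap.ker f)) : LinearMap.range f ≃ₗ[R] S :=
  f.quotKerEquivRange.symm.trans (Submodule.quotientEquivOfIsCompl _ _ h.symm)

theorem eqOn_span_iff_hankelMatrix_eq {K A ι σ : Type*} [CommSemiring K] [CommSemiring A]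
    [Algebra K A] (L L' : Module.Dual K A) (m : ι → A) (x : σ → A) :
    (∀ p ∈ Submodule.span K
        ({a | ∃ j k, a = m j * m k} ∪ {a | ∃ i j k, a = x i * (m j * m k)}), L' p = L p) ↔
      hankelMatrix L' m = hankelMatrix L m ∧
        ∀ i, hankelMatrix (L' ∘ₗ LinearMap.mulLeft K (x i)) m =
          hankelMatrix (L ∘ₗ LinearMap.mulLeft K (x i)) m := by
  constructor
  · intro h
    refine ⟨?_, fun i => ?_⟩ <;> ext j k
    · exact h _ (Submodule.subset_span (Or.inl ⟨j, k, rfl⟩))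
    · exact h _ (Submodule.subset_span (Or.inr ⟨i, j, k, rfl⟩))
  · rintro ⟨h, hx⟩ p hp
    refine LinearMap.eqOn_span ?_ hp
    rintro _ (⟨j, k, rfl⟩ | ⟨i, j, k, rfl⟩)
    · exact Matrix.ext_iff.mpr h j k
    · exact Matrix.ext_iff.mpr (hx i) j k

namespace FlatExtension

section Coordinates

variable {K ι σ : Type*} [CommRing K] (b : ι → σ →₀ ℕ)

open scoped Classical in
/-- The coordinates of `1` in the family `x^b`; it is `0` if no `b j` vanishes, which for a family
connected to `1` happens only when `ι` is empty. -/
noncomputable def unitCoords : ι → K := fun j => if b j = 0 then 1 else 0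

theorem unitCoords_eq_single [DecidableEq ι] {b : ι → σ →₀ ℕ} (hinj : Function.Injective b)
    {j : ι} (hj : b j = 0) : unitCoords (K := K) b = Pi.single j 1 := by
  ext k
  simp only [unitCoords, Pi.single_apply, ← hj, hinj.eq_iff]

variable [Fintype ι]

noncomputable def combination : (ι → K) →ₗ[K] MvPolynomial σ K :=
  Fintype.linearCombination K fun j => monomial (b j) 1

theorem apply_combination_mul (L : Module.Dual K (MvPolynomial σ K)) (c c' : ι → K) :
    L (combination b c * combination b c') =
      c ⬝ᵥ hankelMatrix L (fun j => monomial (b j) 1) *ᵥ c' :=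
  apply_linearCombination_mul L _ c c'

variable [DecidableEq ι] (M : σ → Matrix ι ι K) (hM : ∀ i j, Commute (M i) (M j))

noncomputable def coords : MvPolynomial σ K →ₗ[K] ι → K where
  toFun p := aevalOfCommute M hM p *ᵥ unitCoords b
  map_add' p q := by rw [map_add, add_mulVec]
  map_smul' a p := by rw [map_smul, smul_mulVec, RingHom.id_apply]

theorem coords_apply (p : MvPolynomial σ K) :
    coords b M hM p = aevalOfCommute M hM p *ᵥ unitCoords b := rfl

theorem coords_mul (p q : MvPolynomial σ K) :
    coords b M hM (p * q) = aevalOfCommute M hM p *ᵥ coords b M hM q := by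
  rw [coords_apply, coords_apply, map_mul, mulVec_mulVec]

theorem coords_monomial (hinj : Function.Injective b) (hb : IsConnectedToOne b)
    (hcol : ∀ i j j', b j = Finsupp.single i 1 + b j' → M i *ᵥ Pi.single j' 1 = Pi.single j 1)
    (j : ι) : coords b M hM (monomial (b j) 1) = Pi.single j 1 := by
  refine hb.induction (P := fun j => coords b M hM (monomial (b j) 1) = Pi.single j 1)
    (fun j hj => ?_) (fun i j j' hj ih => ?_) j
  · rw [hj, monomial_zero', C_1, coords_apply, map_one, one_mulVec, unitCoords_eq_single hinj hj]
  · rw [hj, monomial_single_add, pow_one, coords_mul, aevalOfCommute_X, ih, hcol i j j' hj]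

variable {b M hM}

theorem coords_combination (hcoords : ∀ j, coords b M hM (monomial (b j) 1) = Pi.single j 1)
    (c : ι → K) : coords b M hM (combination b c) = c := by
  simp only [combination, Fintype.linearCombination_apply, map_sum, map_smul, hcoords,
    ← Pi.single_smul, smul_eq_mul, mul_one, Finset.univ_sum_single]

variable (b M hM)

noncomputable def extension (H : Matrix ι ι K) : Module.Dual K (MvPolynomial σ K) where
  toFun p := unitCoords b ⬝ᵥ H *ᵥ coords b M hM p
  map_add' p q := by rw [map_add, mulVec_add, dotProduct_add]
  map_smul' a p := by rw [map_smul, mulVec_smul, dotProduct_smul, RingHom.id_apply]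

variable {b M hM} {H : Matrix ι ι K}

theorem extension_mul (hH : H.IsSymm) (hHM : ∀ i, (H * M i).IsSymm) (p q : MvPolynomial σ K) :
    extension b M hM H (p * q) = coords b M hM p ⬝ᵥ H *ᵥ coords b M hM q := by
  change unitCoords b ⬝ᵥ H *ᵥ coords b M hM (p * q) = _
  rw [coords_mul, mulVec_mulVec, ← (hH.mul_aevalOfCommute hM hHM p).eq, transpose_mul, hH.eq,
    ← mulVec_mulVec, dotProduct_mulVec, vecMul_transpose]
  rfl

theorem hankelMatrix_extension (hH : H.IsSymm) (hHM : ∀ i, (H * M i).IsSymm)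
    (hcoords : ∀ j, coords b M hM (monomial (b j) 1) = Pi.single j 1) :
    hankelMatrix (extension b M hM H) (fun j => monomial (b j) 1) = H := by
  ext j k
  simp only [hankelMatrix, of_apply, extension_mul hH hHM, hcoords]
  simp

theorem hankelMatrix_extension_comp_X (hH : H.IsSymm) (hHM : ∀ i, (H * M i).IsSymm)
    (hcoords : ∀ j, coords b M hM (monomial (b j) 1) = Pi.single j 1) (i : σ) :
    hankelMatrix (extension b M hM H ∘ₗ LinearMap.mulLeft K (X i)) (fun j => monomial (b j) 1) =
      H * M i := by
  ext j k
  rw [← (hHM i).eq]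
  simp only [hankelMatrix, of_apply, LinearMap.comp_apply, LinearMap.mulLeft_apply, ← mul_assoc,
    extension_mul hH hHM, coords_mul, aevalOfCommute_X, hcoords, mulVec_single_one]
  rw [dotProduct, transpose_apply, mul_apply]
  exact Finset.sum_congr rfl fun l _ => by rw [col_apply, col_apply, hH.apply, mul_comm]

end Coordinates

section Hankel

variable {K ι : Type*} [Field K] [Fintype ι] {n : ℕ}

theorem mem_ker_hankelOp {Λ : Module.Dual K (MvPolynomial (Fin n) K)}
    {p : MvPolynomial (Fin n) K} :
    p ∈ LinearMap.ker (hankelOp K n Λ) ↔ ∀ q, Λ (p * q) = 0 := by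
  simp [LinearMap.ext_iff, hankelOp]

theorem ker_hankelOp (Λ : Module.Dual K (MvPolynomial (Fin n) K)) :
    LinearMap.ker (hankelOp K n Λ) = (hankelIdeal K n Λ).restrictScalars K := by
  ext p
  exact mem_ker_hankelOp

theorem finite_range_hankelOp_and_finrank_eq {b : ι → Fin n →₀ ℕ} (hinj : Function.Injective b)
    {Λ : Module.Dual K (MvPolynomial (Fin n) K)}
    (hcompl : IsCompl (Submodule.span K (Set.range fun j => monomial (b j) (1 : K)))
      (LinearMap.ker (hankelOp K n Λ))) :
    Module.Finite K (LinearMap.range (hankelOp K n Λ)) ∧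
      Module.finrank K (LinearMap.range (hankelOp K n Λ)) = Fintype.card ι := by
  have hli : LinearIndependent K fun j => monomial (b j) (1 : K) := by
    simpa [Function.comp_def] using (basisMonomials (Fin n) K).linearIndependent.comp b hinj
  have := FiniteDimensional.span_of_finite K (Set.finite_range fun j => monomial (b j) (1 : K))
  let e := LinearMap.rangeEquivOfIsCompl _ hcompl
  exact ⟨Module.Finite.equiv e.symm, e.finrank_eq.trans (finrank_span_eq_card hli)⟩

variable [DecidableEq ι] {b : ι → Fin n →₀ ℕ} {M : Fin n → Matrix ι ι K}
  {hM : ∀ i j, Commute (M i) (M j)} {H : Matrix ι ι K}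

theorem ker_hankelOp_extension (hH : IsUnit H) (hHs : H.IsSymm) (hHM : ∀ i, (H * M i).IsSymm)
    (hcoords : ∀ j, coords b M hM (monomial (b j) (1 : K)) = Pi.single j 1) :
    LinearMap.ker (hankelOp K n (extension b M hM H)) = LinearMap.ker (coords b M hM) := by
  ext p
  rw [mem_ker_hankelOp, LinearMap.mem_ker]
  simp only [extension_mul hHs hHM]
  refine ⟨fun h => vecMul_injective_iff_isUnit.mpr hH ?_, fun h q => by rw [h, zero_dotProduct]⟩
  refine dotProduct_eq _ _ fun w => ?_
  simpa [← dotProduct_mulVec, coords_combination hcoords] using h (combination b w)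

theorem isCompl_span_ker_hankelOp_extension (hH : IsUnit H) (hHs : H.IsSymm)
    (hHM : ∀ i, (H * M i).IsSymm)
    (hcoords : ∀ j, coords b M hM (monomial (b j) (1 : K)) = Pi.single j 1) :
    IsCompl (Submodule.span K (Set.range fun j => monomial (b j) (1 : K)))
      (LinearMap.ker (hankelOp K n (extension b M hM H))) := by
  rw [ker_hankelOp_extension hH hHs hHM hcoords, ← Fintype.range_linearCombination]
  exact LinearMap.isCompl_range_ker_of_comp_eq_id (LinearMap.ext (coords_combination hcoords))

theorem mulVec_single_eq_of_eq_add (Λ : Module.Dual K (MvPolynomial (Fin n) K)) (hH : IsUnit H)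
    (hG : hankelMatrix Λ (fun j => monomial (b j) (1 : K)) = H)
    (hGX : ∀ i, hankelMatrix (Λ ∘ₗ LinearMap.mulLeft K (X i)) (fun j => monomial (b j) (1 : K)) =
      H * M i)
    {i : Fin n} {j j' : ι} (h : b j = Finsupp.single i 1 + b j') :
    M i *ᵥ Pi.single j' 1 = Pi.single j 1 := by
  apply mulVec_injective_iff_isUnit.mpr hH
  ext l
  rw [mulVec_mulVec, ← hGX i, ← hG, mulVec_single_one, mulVec_single_one]
  change Λ (X i * (monomial (b l) 1 * monomial (b j') 1)) =
    Λ (monomial (b l) 1 * monomial (b j) 1)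
  rw [h, monomial_single_add, pow_one, mul_left_comm]

variable {Λ : Module.Dual K (MvPolynomial (Fin n) K)}

theorem X_mul_combination_sub_mem_ker (hH : IsUnit H)
    (hG : hankelMatrix Λ (fun j => monomial (b j) (1 : K)) = H)
    (hGX : ∀ i, hankelMatrix (Λ ∘ₗ LinearMap.mulLeft K (X i)) (fun j => monomial (b j) (1 : K)) =
      H * M i)
    (hcompl : IsCompl (Submodule.span K (Set.range fun j => monomial (b j) (1 : K)))
      (LinearMap.ker (hankelOp K n Λ))) (i : Fin n) (c : ι → K) :
    X i * combination b c - combination b (M i *ᵥ c) ∈ LinearMap.ker (hankelOp K n Λ) := by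
  have hmem : X i * combination b c ∈
      LinearMap.range (combination b) ⊔ LinearMap.ker (hankelOp K n Λ) := by
    rw [combination, Fintype.range_linearCombination, hcompl.sup_eq_top]
    trivial
  obtain ⟨_, ⟨c', rfl⟩, k, hk, hsum⟩ := Submodule.mem_sup.mp hmem
  suffices c' = M i *ᵥ c by rwa [← this, ← hsum, add_sub_cancel_left]
  apply mulVec_injective_iff_isUnit.mpr hH
  refine dotProduct_eq _ _ fun w => ?_
  have hk' : Λ (combination b w * k) = 0 := by
    rw [mul_comm]
    exact mem_ker_hankelOp.mp hk _
  have h1 : Λ (combination b w * combination b c') = w ⬝ᵥ H *ᵥ c' := by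
    rw [← hG, apply_combination_mul]
  have h2 : Λ (combination b w * (X i * combination b c)) = w ⬝ᵥ H *ᵥ (M i *ᵥ c) := by
    rw [mulVec_mulVec, ← hGX i, ← apply_combination_mul, LinearMap.comp_apply,
      LinearMap.mulLeft_apply, mul_left_comm]
  rw [dotProduct_comm, dotProduct_comm _ w, ← h1, ← h2, ← hsum, mul_add, map_add, hk', add_zero]

theorem one_sub_combination_unitCoords_mem_ker (hinj : Function.Injective b)
    (hb : IsConnectedToOne b)
    (hcompl : IsCompl (Submodule.span K (Set.range fun j => monomial (b j) (1 : K)))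
      (LinearMap.ker (hankelOp K n Λ))) :
    1 - combination b (unitCoords b) ∈ LinearMap.ker (hankelOp K n Λ) := by
  cases isEmpty_or_nonempty ι
  · rw [Set.range_eq_empty, Submodule.span_empty] at hcompl
    rw [eq_top_of_bot_isCompl hcompl]
    trivial
  · obtain ⟨j, hj⟩ := hb.exists_eq_zero
    rw [unitCoords_eq_single hinj hj]
    simp [combination, hj]

theorem sub_combination_coords_mem_ker
    (hone : 1 - combination b (unitCoords b) ∈ LinearMap.ker (hankelOp K n Λ))
    (hX : ∀ i c, X i * combination b c - combination b (M i *ᵥ c) ∈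
      LinearMap.ker (hankelOp K n Λ)) (p : MvPolynomial (Fin n) K) :
    p - combination b (coords b M hM p) ∈ LinearMap.ker (hankelOp K n Λ) := by
  induction p using MvPolynomial.induction_on with
  | C a =>
    rw [C_eq_smul_one, map_smul, map_smul, coords_apply, map_one, one_mulVec, ← smul_sub]
    exact Submodule.smul_mem _ a hone
  | add p q hp hq =>
    rw [map_add, map_add, add_sub_add_comm]
    exact add_mem hp hq
  | mul_X p i hp =>
    have hmul : p * X i - combination b (coords b M hM (p * X i)) =
        X i * (p - combination b (coords b M hM p)) +
          (X i * combination b (coords b M hM p) - combination b (M i *ᵥ coords b M hM p)) := by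
      rw [mul_comm p, coords_mul, aevalOfCommute_X]
      ring
    rw [hmul, ker_hankelOp]
    rw [ker_hankelOp] at hp hX
    exact add_mem (Ideal.mul_mem_left _ _ hp) (hX i _)

theorem apply_mul_eq_coords_dotProduct (hG : hankelMatrix Λ (fun j => monomial (b j) 1) = H)
    (hsub : ∀ p, p - combination b (coords b M hM p) ∈ LinearMap.ker (hankelOp K n Λ))
    (p q : MvPolynomial (Fin n) K) :
    Λ (p * q) = coords b M hM p ⬝ᵥ H *ᵥ coords b M hM q := by
  have hp := mem_ker_hankelOp.mp (hsub p) q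
  have hq := mem_ker_hankelOp.mp (hsub q) (combination b (coords b M hM p))
  rw [sub_mul, map_sub, sub_eq_zero] at hp hq
  rw [← hG, ← apply_combination_mul, hp, mul_comm, hq, mul_comm]

end Hankel

end FlatExtension

open FlatExtension

theorem flat_extension_of_commuting_multiplication_general (K : Type*) [Field K] (n r : ℕ)
    (b : Fin r → (Fin n →₀ ℕ))
    (hinj : Function.Injective b)
    (hconn : ∀ j, b j = 0 ∨ ∃ (i : Fin n) (j' : Fin r), b j = Finsupp.single i 1 + b j')
    (Λ : Module.Dual K (MvPolynomial (Fin n) K))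
    (BBp : Submodule K (MvPolynomial (Fin n) K))
    (hBBp : BBp = Submodule.span K
      ({x | ∃ j k, x = (monomial (b j) (1 : K)) * monomial (b k) 1} ∪
       {x | ∃ (i : Fin n) (j k : Fin r),
          x = X i * ((monomial (b j) (1 : K)) * monomial (b k) 1)}))
    (HB : Matrix (Fin r) (Fin r) K)
    (hHB : HB = Matrix.of fun j k => Λ ((monomial (b j) 1) * monomial (b k) 1))
    (HBx : Fin n → Matrix (Fin r) (Fin r) K)
    (hHBx : ∀ i, HBx i = Matrix.of fun j k => Λ (X i * ((monomial (b j) 1) * monomial (b k) 1)))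
    (hdet : IsUnit HB.det)
    (hcomm : ∀ i i' : Fin n,
      (HB⁻¹ * HBx i) * (HB⁻¹ * HBx i') = (HB⁻¹ * HBx i') * (HB⁻¹ * HBx i)) :
    ∃! Λt : Module.Dual K (MvPolynomial (Fin n) K),
      (∀ p ∈ BBp, Λt p = Λ p) ∧
      Module.Finite K ↥(LinearMap.range (hankelOp K n Λt)) ∧
      Module.finrank K ↥(LinearMap.range (hankelOp K n Λt)) = r ∧
      IsCompl
        (Submodule.span K (Set.range fun j => (monomial (b j) (1 : K) : MvPolynomial (Fin n) K)))
        (LinearMap.ker (hankelOp K n Λt)) := by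
  have hM : ∀ i j, Commute (HB⁻¹ * HBx i) (HB⁻¹ * HBx j) := hcomm
  have hH : IsUnit HB := (isUnit_iff_isUnit_det HB).mpr hdet
  have hG : hankelMatrix Λ (fun j => monomial (b j) 1) = HB := hHB.symm
  have hGX (i : Fin n) : hankelMatrix (Λ ∘ₗ LinearMap.mulLeft K (X i))
      (fun j => monomial (b j) 1) = HB * (HB⁻¹ * HBx i) := by
    rw [mul_nonsing_inv_cancel_left _ _ hdet, hHBx]
    rfl
  have hHs : HB.IsSymm := hG ▸ isSymm_hankelMatrix _ _
  have hHMs (i : Fin n) : (HB * (HB⁻¹ * HBx i)).IsSymm := hGX i ▸ isSymm_hankelMatrix _ _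
  have hcoords := coords_monomial b _ hM hinj hconn
    fun _ _ _ h => mulVec_single_eq_of_eq_add Λ hH hG hGX h
  have hagree (Λ' : Module.Dual K (MvPolynomial (Fin n) K)) :
      (∀ p ∈ BBp, Λ' p = Λ p) ↔ hankelMatrix Λ' (fun j => monomial (b j) 1) = HB ∧
        ∀ i, hankelMatrix (Λ' ∘ₗ LinearMap.mulLeft K (X i)) (fun j => monomial (b j) 1) =
          HB * (HB⁻¹ * HBx i) := by
    rw [hBBp, eqOn_span_iff_hankelMatrix_eq Λ Λ' _ X, hG]
    simp only [hGX]
  have hcompl := isCompl_span_ker_hankelOp_extension hH hHs hHMs hcoords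
  obtain ⟨hfin, hrank⟩ := finite_range_hankelOp_and_finrank_eq hinj hcompl
  refine ⟨extension b _ hM HB, ⟨(hagree _).2 ⟨hankelMatrix_extension hHs hHMs hcoords,
    hankelMatrix_extension_comp_X hHs hHMs hcoords⟩, hfin, hrank.trans (Fintype.card_fin r),
    hcompl⟩, ?_⟩
  rintro Λ' ⟨hΛ', -, -, hcompl'⟩
  obtain ⟨hG', hGX'⟩ := (hagree Λ').1 hΛ'
  have hsub := sub_combination_coords_mem_ker (hM := hM)
    (one_sub_combination_unitCoords_mem_ker hinj hconn hcompl')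
    (X_mul_combination_sub_mem_ker hH hG' hGX' hcompl')
  refine LinearMap.ext fun p => ?_
  rw [← mul_one p, apply_mul_eq_coords_dotProduct hG' hsub, extension_mul hHs hHMs]

/-- Flat extension theorem: if the Hankel matrix `H^B_Λ` is invertible and the formal
multiplication operators `M_i = (H^B_Λ)⁻¹ H^B_{x_i ⋆ Λ}` pairwise commute, then `Λ`
(given on the span of `B·B⁺`) admits a unique extension `Λ̃` with `rank H_Λ̃ = r` and
`B` a basis of `A_Λ̃`. -/
theorem flat_extension_of_commuting_multiplication (K : Type*) [Field K] (n r d : ℕ)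
    (b : Fin r → (Fin n →₀ ℕ))
    (hinj : Function.Injective b)
    (hdeg : ∀ j, (b j).sum (fun _ e => e) ≤ d)
    (hconn : ∀ j, b j = 0 ∨ ∃ (i : Fin n) (j' : Fin r), b j = Finsupp.single i 1 + b j')
    (Λ : Module.Dual K (MvPolynomial (Fin n) K))
    (BBp : Submodule K (MvPolynomial (Fin n) K))
    (hBBp : BBp = Submodule.span K
      ({x | ∃ j k, x = (monomial (b j) (1 : K)) * monomial (b k) 1} ∪
       {x | ∃ (i : Fin n) (j k : Fin r),
          x = X i * ((monomial (b j) (1 : K)) * monomial (b k) 1)}))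
    (HB : Matrix (Fin r) (Fin r) K)
    (hHB : HB = Matrix.of fun j k => Λ ((monomial (b j) 1) * monomial (b k) 1))
    (HBx : Fin n → Matrix (Fin r) (Fin r) K)
    (hHBx : ∀ i, HBx i = Matrix.of fun j k => Λ (X i * ((monomial (b j) 1) * monomial (b k) 1)))
    (hdet : IsUnit HB.det)
    (hcomm : ∀ i i' : Fin n,
      (HB⁻¹ * HBx i) * (HB⁻¹ * HBx i') = (HB⁻¹ * HBx i') * (HB⁻¹ * HBx i)) :
    ∃! Λt : Module.Dual K (MvPolynomial (Fin n) K),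
      (∀ p ∈ BBp, Λt p = Λ p) ∧
      Module.Finite K ↥(LinearMap.range (hankelOp K n Λt)) ∧
      Module.finrank K ↥(LinearMap.range (hankelOp K n Λt)) = r ∧
      IsCompl
        (Submodule.span K (Set.range fun j => (monomial (b j) (1 : K) : MvPolynomial (Fin n) K)))
        (LinearMap.ker (hankelOp K n Λt)) :=
  flat_extension_of_commuting_multiplication_general K n r b hinj hconn Λ BBp hBBp HB hHB HBx hHBx
    hdet hcomm
end
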